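/- arXiv:2604.22073 — 3 statements merged into one kernel-verified Lean document; each statement's English description precedes it below -/
import Mathlib

section
/- If λ > 0 and α : [0,T) → (0,∞) is a C² solution of α̈ = λ α^{-n(γ-1)-1} with α(0) = 1, then α(t) is bounded below by the positive constant α_* = (2λ/(n(γ-1)a))^{1/(n(γ-1))} where a = (α̇(0))² + 2λ/(n(γ-1)); in particular α never vanishes and no accumulation occurs. -/
/-!
The energy `α̇² + (2λ/k) α^{-k}`, `k = n(γ-1)`, is conserved along solutions, so it equals its
initial value `a`. Dropping `α̇² ≥ 0` gives `(2λ/k) α^{-k} ≤ a`, i.e. `α ≥ α_*`; at `t = 0`,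
where `α = 1`, the same inequality gives `α_* ≤ 1`.
-/

open Set

theorem constant_of_hasDerivAt_zero_Ico {E : Type*} [NormedAddCommGroup E] [NormedSpace ℝ E]
    {f : ℝ → E} {a b : ℝ} (hf : ∀ x ∈ Ico a b, HasDerivAt f 0 x) :
    ∀ x ∈ Ico a b, f x = f a := by
  intro x hx
  have ha : a ∈ Ico a b := ⟨le_rfl, hx.1.trans_lt hx.2⟩
  have := (convex_Ico a b).norm_image_sub_le_of_norm_hasDerivWithin_le
    (fun y hy => (hf y hy).hasDerivWithinAt) (fun _ _ => norm_zero.le) ha hx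
  simpa only [zero_mul, norm_le_zero_iff, sub_eq_zero] using this

theorem hasDerivAt_energy_eq_zero {α α' g G : ℝ → ℝ} {t : ℝ}
    (hα : HasDerivAt α (α' t) t) (hα' : HasDerivAt α' (g (α t)) t)
    (hG : HasDerivAt G (g (α t)) (α t)) :
    HasDerivAt (fun s => α' s ^ 2 - 2 * G (α s)) 0 t := by
  refine ((hα'.fun_pow 2).sub ((hG.comp t hα).const_mul 2)).congr_deriv ?_
  push_cast
  ring

theorem hasDerivAt_const_mul_rpow_neg {c k x : ℝ} (hk : k ≠ 0) (hx : x ≠ 0) :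
    HasDerivAt (fun y => -(c / k) * y ^ (-k)) (c * x ^ (-k - 1)) x := by
  refine ((Real.hasDerivAt_rpow_const (Or.inl hx)).const_mul (-(c / k))).congr_deriv ?_
  field_simp

theorem div_rpow_one_div_le_of_mul_rpow_neg_le {c k a x : ℝ} (hc : 0 ≤ c) (hk : 0 < k)
    (ha : 0 < a) (hx : 0 < x) (h : c * x ^ (-k) ≤ a) : (c / a) ^ (1 / k) ≤ x := by
  have hck : c / a ≤ x ^ k := by
    rw [Real.rpow_neg hx.le, ← div_eq_mul_inv, div_le_iff₀ (by positivity)] at h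
    rwa [div_le_iff₀ ha, mul_comm]
  calc (c / a) ^ (1 / k) ≤ (x ^ k) ^ (1 / k) := by gcongr
    _ = x := by rw [← Real.rpow_mul hx.le, mul_one_div_cancel hk.ne', Real.rpow_one]

theorem lambda_pos_no_accumulation_general
    (n : ℕ) (hn : 1 ≤ n) (γ lam T : ℝ) (hγ : 1 < γ) (hlam : 0 < lam)
    (α α' : ℝ → ℝ)
    (hαpos : ∀ t ∈ Set.Ico (0:ℝ) T, 0 < α t)
    (hα0 : α 0 = 1)
    (hα' : ∀ t ∈ Set.Ico (0:ℝ) T, HasDerivAt α (α' t) t)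
    (hα'' : ∀ t ∈ Set.Ico (0:ℝ) T,
      HasDerivAt α' (lam * α t ^ (-(n * (γ - 1)) - 1)) t)
    (a : ℝ) (ha : a = (α' 0) ^ 2 + 2 * lam / (n * (γ - 1)))
    (αstar : ℝ) (hαstar : αstar = (2 * lam / (n * (γ - 1) * a)) ^ (1 / (n * (γ - 1)))) :
    (∀ t ∈ Set.Ico (0:ℝ) T, αstar ≤ α t) ∧ αstar ≤ 1 := by
  set k : ℝ := n * (γ - 1)
  have hk : 0 < k := mul_pos (by exact_mod_cast hn) (by linarith)
  have ha_pos : 0 < a := by rw [ha]; positivity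
  have hbound : ∀ x, 0 < x → 2 * lam / k * x ^ (-k) ≤ a → αstar ≤ x := fun x hx h => by
    rw [hαstar, div_mul_eq_div_div]
    exact div_rpow_one_div_le_of_mul_rpow_neg_le (by positivity) hk ha_pos hx h
  have henergy : ∀ t ∈ Ico 0 T, α' t ^ 2 + 2 * lam / k * α t ^ (-k) = a := by
    intro t ht
    have := constant_of_hasDerivAt_zero_Ico (fun s hs =>
      hasDerivAt_energy_eq_zero (g := fun y => lam * y ^ (-k - 1)) (hα' s hs) (hα'' s hs)
        (hasDerivAt_const_mul_rpow_neg hk.ne' (hαpos s hs).ne')) t ht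
    simp only [hα0, Real.one_rpow] at this
    rw [ha]
    linear_combination this
  refine ⟨fun t ht => hbound _ (hαpos t ht) ?_, hbound 1 one_pos ?_⟩
  · linarith [henergy t ht, sq_nonneg (α' t)]
  · rw [Real.one_rpow, mul_one, ha]
    linarith [sq_nonneg (α' 0)]

/-- Case λ > 0: any positive C² solution of `α̈ = λ α^{-n(γ-1)-1}` on `[0,T)` with
`α(0) = 1` is bounded below by `α_* = (2λ/(n(γ-1)a))^{1/(n(γ-1))}`, where
`a = (α̇(0))² + 2λ/(n(γ-1))`; moreover `α_* ≤ 1`.  In particular `α` never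
vanishes and no accumulation occurs. -/
theorem lambda_pos_no_accumulation
    (n : ℕ) (hn : 1 ≤ n) (γ lam T : ℝ) (hγ : 1 < γ) (hlam : 0 < lam) (hT : 0 < T)
    (α α' : ℝ → ℝ)
    (hαpos : ∀ t ∈ Set.Ico (0:ℝ) T, 0 < α t)
    (hα0 : α 0 = 1)
    (hα' : ∀ t ∈ Set.Ico (0:ℝ) T, HasDerivAt α (α' t) t)
    (hα'' : ∀ t ∈ Set.Ico (0:ℝ) T,
      HasDerivAt α' (lam * α t ^ (-(n * (γ - 1)) - 1)) t)
    (a : ℝ) (ha : a = (α' 0) ^ 2 + 2 * lam / (n * (γ - 1)))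
    (αstar : ℝ) (hαstar : αstar = (2 * lam / (n * (γ - 1) * a)) ^ (1 / (n * (γ - 1)))) :
    (∀ t ∈ Set.Ico (0:ℝ) T, αstar ≤ α t) ∧ αstar ≤ 1 :=
  lambda_pos_no_accumulation_general n hn γ lam T hγ hlam α α' hαpos hα0 hα' hα'' a ha αstar hαstar
end

section
/- With λ = 0, b < 0, n = 3, and singular initial density ρ̄(s) = s^{-2}, the curve r(t) = r(0)(1+bt) exp[1 - (1+bt)^{-3(γ-1)/2}] solves the 1-characteristic ODE ṙ = u - c, and r(t) → 0 as t → t_c = -1/b; thus all 1-characteristics accumulate at the origin exactly at the critical time. -/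
/-! Writing `A(t) = 1 + bt`, the curve is `r = r₀ · φ(A)` with `φ(y) = y · exp (1 - y ^ α)` and
`α = -3(γ-1)/2`. Since `y φ'(y) = (1 - α y ^ α) φ(y)` and `Ȧ = b`, we get
`ṙ = b (1 - α A ^ α) r / A`, which is `u - c` because the normalization says exactly
`b α = √(γ p₀)`. As `t ↑ -1/b` we have `A ↓ 0`, and `0 < φ(y) ≤ e y` for `y > 0`, so `r → 0`. -/

open Real Filter Topology Set

lemma one_add_mul_pos_of_lt_neg_inv {b t : ℝ} (hb : b < 0) (ht : t < -1 / b) :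
    0 < 1 + b * t := by
  rw [lt_div_iff_of_neg hb] at ht
  linarith

lemma hasDerivAt_mul_exp_one_sub_rpow (α : ℝ) {y : ℝ} (hy : 0 < y) :
    HasDerivAt (fun y => y * exp (1 - y ^ α)) ((1 - α * y ^ α) * exp (1 - y ^ α)) y := by
  refine ((hasDerivAt_id y).mul
    ((hasDerivAt_rpow_const (p := α) (Or.inl hy.ne')).const_sub 1).exp).congr_deriv ?_
  rw [id, rpow_sub_one hy.ne']
  field_simp
  ring

lemma mul_exp_one_sub_rpow_le {α y : ℝ} (hy : 0 < y) : y * exp (1 - y ^ α) ≤ exp 1 * y := by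
  rw [mul_comm]
  gcongr
  linarith [rpow_pos_of_pos hy α]

lemma tendsto_mul_exp_one_sub_rpow_nhdsGT_zero (α : ℝ) :
    Tendsto (fun y => y * exp (1 - y ^ α)) (𝓝[>] 0) (𝓝 0) := by
  have hlin : Tendsto (fun y : ℝ => exp 1 * y) (𝓝[>] 0) (𝓝 0) := by
    simpa using ((continuous_const_mul (exp 1)).tendsto 0).mono_left nhdsWithin_le_nhds
  refine squeeze_zero' ?_ ?_ hlin
  · filter_upwards [self_mem_nhdsWithin] with y (hy : 0 < y)
    positivity
  · filter_upwards [self_mem_nhdsWithin] with y (hy : 0 < y)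
    exact mul_exp_one_sub_rpow_le hy

lemma tendsto_one_add_mul_nhdsLT_neg_inv {b : ℝ} (hb : b < 0) :
    Tendsto (fun t => 1 + b * t) (𝓝[<] (-1 / b)) (𝓝[>] 0) := by
  refine tendsto_nhdsWithin_of_tendsto_nhds_of_eventually_within _ ?_ ?_
  · have hcont : Continuous fun t : ℝ => 1 + b * t := by fun_prop
    convert (hcont.tendsto (-1 / b)).mono_left nhdsWithin_le_nhds using 2
    field_simp [hb.ne]
    norm_num
  · filter_upwards [self_mem_nhdsWithin] with t ht
    exact one_add_mul_pos_of_lt_neg_inv hb ht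

theorem one_characteristics_lambda_zero_singular_density_general
    (γ b p₀ r₀ : ℝ) (hb : b < 0)
    (hnorm : 2 * Real.sqrt (γ * p₀) = 3 * |b| * (γ - 1))
    (tc : ℝ) (htc : tc = -1 / b)
    (r : ℝ → ℝ)
    (hr : ∀ t, r t = r₀ * (1 + b * t) *
      Real.exp (1 - (1 + b * t) ^ (-(3 * (γ - 1)) / 2))) :
    (∀ t ∈ Set.Ico (0:ℝ) tc, HasDerivAt r
      (b * r t / (1 + b * t)
        - Real.sqrt (γ * p₀) * (1 + b * t) ^ (-(3 * (γ - 1)) / 2)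
          * (r t / (1 + b * t))) t) ∧
    Filter.Tendsto r (nhdsWithin tc (Set.Iio tc)) (nhds 0) := by
  set α := -(3 * (γ - 1)) / 2
  have hbα : Real.sqrt (γ * p₀) = b * α := by
    have hα : b * α = -b * (3 * (γ - 1)) / 2 := by ring
    rw [abs_of_neg hb] at hnorm
    linarith
  have hr' : r = fun t => r₀ * ((1 + b * t) * exp (1 - (1 + b * t) ^ α)) := by
    funext t
    rw [hr, mul_assoc]
  subst htc
  constructor
  · rintro t ⟨-, ht⟩
    have hA := one_add_mul_pos_of_lt_neg_inv hb ht
    have hAderiv : HasDerivAt (fun t => 1 + b * t) b t := by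
      simpa using ((hasDerivAt_id t).const_mul b).const_add 1
    rw [hr']
    refine (((hasDerivAt_mul_exp_one_sub_rpow α hA).comp t hAderiv).const_mul r₀).congr_deriv ?_
    rw [hbα]
    field_simp
  · rw [hr', ← mul_zero r₀]
    exact ((tendsto_mul_exp_one_sub_rpow_nhdsGT_zero α).comp
      (tendsto_one_add_mul_nhdsLT_neg_inv hb)).const_mul r₀

/-- Case λ = 0, b < 0, n = 3, singular initial density `ρ̄(s) = s^{-2}` (with the
normalization `2√(γp₀) = 3|b|(γ-1)`): the curve
`r(t) = r₀(1+bt) exp[1 - (1+bt)^{-3(γ-1)/2}]` solves the 1-characteristic ODE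
`ṙ = u(t,r) - c(t,r)` with `u(t,r) = br/(1+bt)` and
`c(t,r) = √(γp₀)(1+bt)^{-3(γ-1)/2}·(r/(1+bt))`, and `r(t) → 0` as `t → t_c = -1/b`:
all 1-characteristics accumulate at the origin exactly at the critical time. -/
theorem one_characteristics_lambda_zero_singular_density
    (γ b p₀ r₀ : ℝ) (hγ : 1 < γ) (hb : b < 0) (hp₀ : 0 < p₀) (hr₀ : 0 < r₀)
    (hnorm : 2 * Real.sqrt (γ * p₀) = 3 * |b| * (γ - 1))
    (tc : ℝ) (htc : tc = -1 / b)
    (r : ℝ → ℝ)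
    (hr : ∀ t, r t = r₀ * (1 + b * t) *
      Real.exp (1 - (1 + b * t) ^ (-(3 * (γ - 1)) / 2))) :
    (∀ t ∈ Set.Ico (0:ℝ) tc, HasDerivAt r
      (b * r t / (1 + b * t)
        - Real.sqrt (γ * p₀) * (1 + b * t) ^ (-(3 * (γ - 1)) / 2)
          * (r t / (1 + b * t))) t) ∧
    Filter.Tendsto r (nhdsWithin tc (Set.Iio tc)) (nhds 0) :=
  one_characteristics_lambda_zero_singular_density_general γ b p₀ r₀ hb hnorm tc htc r hr
end

section
/- For the affine motion R(t,s) = α(t)s with α solving α̈ = λ α^{-n(γ-1)-1}, α(0)=1, the fields ρ(t,r) = -α(t)^{1-n}/(λ r) · p̄'(r/α(t)), u(t,r) = (α̇(t)/α(t)) r, p(t,r) = α(t)^{-nγ} p̄(r/α(t)) solve the radial Euler system for an ideal gas with adiabatic exponent γ, provided λ ≠ 0 and p̄ is C² with sgn p̄' = -sgn λ. -/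
/-!
Every field is self-similar, `f(t,r) = α(t)^k g(r/α(t))`, and along the affine flow
`u = (α̇/α) r` such a field has material derivative `k (α̇/α) f`, while `div u = n α̇/α`.
The density has weight `-n` and the pressure weight `-nγ`, which is exactly what the
continuity and energy equations require. The momentum equation reduces to
`(α̈/α) r = -p_r/ρ`, and with the reference density `ρ̄(s) = -p̄'(s)/(λ s)` the right-hand
side is `λ α^{-n(γ-1)-2} r`, i.e. the ODE for `α`.
-/

open Filter Topology

noncomputable section

namespace RadialEuler

def materialDeriv (f v : ℝ → ℝ → ℝ) (t r : ℝ) : ℝ :=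
  deriv (fun τ => f τ r) t + v t r * deriv (f t) r

def radialDiv (n : ℕ) (v : ℝ → ℝ → ℝ) (t r : ℝ) : ℝ :=
  deriv (v t) r + (n - 1) * v t r / r

def affineVelocity (a a' : ℝ → ℝ) (t r : ℝ) : ℝ := a' t / a t * r

def scalingField (a : ℝ → ℝ) (k : ℝ) (g : ℝ → ℝ) (t r : ℝ) : ℝ := a t ^ k * g (r / a t)

/-- Hydrostatic balance `p̄'(s) = -λ s ρ̄(s)`. -/
def refDensity (lam : ℝ) (pbar' : ℝ → ℝ) (s : ℝ) : ℝ := -(pbar' s / (lam * s))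

theorem materialDeriv_congr {f g v : ℝ → ℝ → ℝ} {t : ℝ} (h : ∀ᶠ τ in 𝓝 t, f τ = g τ)
    (r : ℝ) : materialDeriv f v t r = materialDeriv g v t r := by
  have hr : (fun τ => f τ r) =ᶠ[𝓝 t] fun τ => g τ r := h.mono fun τ hτ => congrFun hτ r
  rw [materialDeriv, materialDeriv, hr.deriv_eq, h.self_of_nhds]

theorem deriv_affineVelocity (a a' : ℝ → ℝ) (t r : ℝ) :
    deriv (affineVelocity a a' t) r = a' t / a t := by
  have h : HasDerivAt (fun x => a' t / a t * x) (a' t / a t * 1) r :=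
    (hasDerivAt_id r).const_mul _
  exact h.deriv.trans (mul_one _)

theorem radialDiv_affineVelocity (n : ℕ) (a a' : ℝ → ℝ) {t r : ℝ} (hr : r ≠ 0) :
    radialDiv n (affineVelocity a a') t r = n * (a' t / a t) := by
  rw [radialDiv, deriv_affineVelocity, affineVelocity]
  field_simp
  ring

theorem materialDeriv_affineVelocity {a a' : ℝ → ℝ} {a'' t : ℝ} (r : ℝ) (ha : a t ≠ 0)
    (hda : HasDerivAt a (a' t) t) (hda' : HasDerivAt a' a'' t) :
    materialDeriv (affineVelocity a a') (affineVelocity a a') t r = a'' / a t * r := by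
  have htime : HasDerivAt (fun τ => affineVelocity a a' τ r)
      ((a'' * a t - a' t * a' t) / a t ^ 2 * r) t :=
    (hda'.div hda ha).mul_const r
  rw [materialDeriv, htime.deriv, deriv_affineVelocity, affineVelocity]
  field_simp
  ring

theorem hasDerivAt_scalingField_space {a g : ℝ → ℝ} {g' t : ℝ} (k : ℝ) {r : ℝ}
    (hg : HasDerivAt g g' (r / a t)) :
    HasDerivAt (scalingField a k g t) (a t ^ k * g' / a t) r := by
  have h : HasDerivAt (fun x => a t ^ k * g (x / a t)) (a t ^ k * (g' * (1 / a t))) r :=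
    (hg.comp r ((hasDerivAt_id r).div_const (a t))).const_mul (a t ^ k)
  exact h.congr_deriv (by ring)

theorem hasDerivAt_scalingField_time {a g : ℝ → ℝ} {a' g' t : ℝ} (k : ℝ) {r : ℝ}
    (ha : 0 < a t) (hda : HasDerivAt a a' t) (hg : HasDerivAt g g' (r / a t)) :
    HasDerivAt (fun τ => scalingField a k g τ r)
      (a' * k * a t ^ (k - 1) * g (r / a t) - a t ^ k * g' * r * a' / a t ^ 2) t := by
  have h : HasDerivAt (fun τ => a τ ^ k * g (r / a τ))
      (a' * k * a t ^ (k - 1) * g (r / a t) + a t ^ k * (g' * ((0 * a t - r * a') / a t ^ 2))) t :=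
    (hda.rpow_const (Or.inl ha.ne')).mul (hg.comp t ((hasDerivAt_const t r).div hda ha.ne'))
  exact h.congr_deriv (by ring)

theorem materialDeriv_scalingField {a a' g : ℝ → ℝ} {t r : ℝ} (k : ℝ) (ha : 0 < a t)
    (hda : HasDerivAt a (a' t) t) (hg : DifferentiableAt ℝ g (r / a t)) :
    materialDeriv (scalingField a k g) (affineVelocity a a') t r
      = k * (a' t / a t) * scalingField a k g t r := by
  rw [materialDeriv, (hasDerivAt_scalingField_time k ha hda hg.hasDerivAt).deriv,
    (hasDerivAt_scalingField_space k hg.hasDerivAt).deriv, affineVelocity, scalingField,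
    Real.rpow_sub_one ha.ne']
  field_simp
  ring

theorem eventually_eq_scalingField_refDensity {α pbar' : ℝ → ℝ} {ρ : ℝ → ℝ → ℝ}
    {n lam t : ℝ} (hρ : ∀ t r, ρ t r = -(α t ^ (1 - n) / (lam * r)) * pbar' (r / α t))
    (hα : ∀ᶠ τ in 𝓝 t, 0 < α τ) :
    ∀ᶠ τ in 𝓝 t, ρ τ = scalingField α (-n) (refDensity lam pbar') τ := by
  filter_upwards [hα] with τ hτ
  funext r
  rw [hρ, scalingField, refDensity, Real.rpow_sub hτ, Real.rpow_one, Real.rpow_neg hτ.le,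
    mul_div_assoc', div_div_eq_mul_div]
  ring

end RadialEuler

open RadialEuler in
theorem affine_flow_lambda_nonzero_solves_euler_general
    (n : ℕ) (γ lam : ℝ) (hlam : lam ≠ 0)
    (I : Set ℝ)
    (pbar pbar' pbar'' : ℝ → ℝ)
    (hpbar' : ∀ s, 0 < s → HasDerivAt pbar (pbar' s) s)
    (hpbar'' : ∀ s, 0 < s → HasDerivAt pbar' (pbar'' s) s)
    (hsgn : ∀ s, 0 < s → lam * pbar' s < 0)
    (α α' : ℝ → ℝ)
    (hαpos : ∀ t ∈ I, 0 < α t)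
    (hα' : ∀ t ∈ I, HasDerivAt α (α' t) t)
    (hα'' : ∀ t ∈ I, HasDerivAt α' (lam * α t ^ (-(n * (γ - 1)) - 1)) t)
    (ρ u p : ℝ → ℝ → ℝ)
    (hρ : ∀ t r, ρ t r = -(α t ^ ((1:ℝ) - n) / (lam * r)) * pbar' (r / α t))
    (hu : ∀ t r, u t r = (α' t / α t) * r)
    (hp : ∀ t r, p t r = α t ^ (-(n * γ)) * pbar (r / α t)) :
    ∀ t ∈ I, ∀ r : ℝ, 0 < r →
      (deriv (fun τ => ρ τ r) t + u t r * deriv (ρ t) r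
        + ρ t r * (deriv (u t) r + (n - 1) * u t r / r) = 0) ∧
      (deriv (fun τ => u τ r) t + u t r * deriv (u t) r
        + deriv (p t) r / ρ t r = 0) ∧
      (deriv (fun τ => p τ r) t + u t r * deriv (p t) r
        + γ * p t r * (deriv (u t) r + (n - 1) * u t r / r) = 0) := by
  intro t ht r hr
  obtain rfl : u = affineVelocity α α' := funext₂ hu
  obtain rfl : p = scalingField α (-(n * γ)) pbar := funext₂ hp
  have hα := hαpos t ht
  have hs : 0 < r / α t := div_pos hr hα
  have hρ_eq := eventually_eq_scalingField_refDensity hρ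
    ((hα' t ht).continuousAt.eventually_const_lt hα)
  have hρ_diff : DifferentiableAt ℝ (refDensity lam pbar') (r / α t) :=
    ((hpbar'' _ hs).differentiableAt.div (differentiableAt_id.const_mul lam)
      (mul_ne_zero hlam hs.ne')).neg
  have hdiv := radialDiv_affineVelocity n α α' (t := t) hr.ne'
  refine ⟨?_, ?_, ?_⟩
  · change materialDeriv ρ _ t r + ρ t r * radialDiv n _ t r = 0
    rw [materialDeriv_congr hρ_eq, materialDeriv_scalingField _ hα (hα' t ht) hρ_diff, hdiv,
      congrFun hρ_eq.self_of_nhds r]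
    ring
  · change materialDeriv _ _ t r + deriv (scalingField _ _ _ t) r / ρ t r = 0
    rw [materialDeriv_affineVelocity r hα.ne' (hα' t ht) (hα'' t ht),
      (hasDerivAt_scalingField_space _ (hpbar' _ hs)).deriv, hρ]
    have hpbar'_ne : pbar' (r / α t) ≠ 0 := fun h0 => by simpa [h0] using hsgn _ hs
    have hexp : α t ^ (-(n * γ)) = α t ^ (-(n * (γ - 1)) - 1) * α t ^ ((1:ℝ) - n) := by
      rw [← Real.rpow_add hα]
      ring_nf
    have hαpow_ne := (Real.rpow_pos_of_pos hα ((1:ℝ) - n)).ne'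
    rw [hexp]
    field_simp
    ring
  · change materialDeriv _ _ t r + γ * _ * radialDiv n _ t r = 0
    rw [materialDeriv_scalingField _ hα (hα' t ht) (hpbar' _ hs).differentiableAt, hdiv]
    ring

/-- Case λ ≠ 0: for the affine motion `R(t,s) = α(t)s` with `α` solving
`α̈ = λ α^{-n(γ-1)-1}`, `α(0) = 1`, and a C² reference pressure `p̄` with
`sgn p̄' = -sgn λ`, the fields `ρ(t,r) = -α^{1-n}/(λr) · p̄'(r/α)`,
`u(t,r) = (α̇/α) r`, `p(t,r) = α^{-nγ} p̄(r/α)` solve the radial Euler system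
for an ideal gas with adiabatic exponent `γ` on `r > 0`. -/
theorem affine_flow_lambda_nonzero_solves_euler
    (n : ℕ) (hn : 1 ≤ n) (γ lam : ℝ) (hγ : 1 < γ) (hlam : lam ≠ 0)
    (I : Set ℝ) (hI : I.OrdConnected) (h0I : (0:ℝ) ∈ I)
    (pbar pbar' pbar'' : ℝ → ℝ)
    (hpbar_pos : ∀ s, 0 < s → 0 < pbar s)
    (hpbar' : ∀ s, 0 < s → HasDerivAt pbar (pbar' s) s)
    (hpbar'' : ∀ s, 0 < s → HasDerivAt pbar' (pbar'' s) s)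
    (hsgn : ∀ s, 0 < s → lam * pbar' s < 0)
    (α α' : ℝ → ℝ)
    (hαpos : ∀ t ∈ I, 0 < α t) (hα0 : α 0 = 1)
    (hα' : ∀ t ∈ I, HasDerivAt α (α' t) t)
    (hα'' : ∀ t ∈ I, HasDerivAt α' (lam * α t ^ (-(n * (γ - 1)) - 1)) t)
    (ρ u p : ℝ → ℝ → ℝ)
    (hρ : ∀ t r, ρ t r = -(α t ^ ((1:ℝ) - n) / (lam * r)) * pbar' (r / α t))
    (hu : ∀ t r, u t r = (α' t / α t) * r)
    (hp : ∀ t r, p t r = α t ^ (-(n * γ)) * pbar (r / α t)) :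
    ∀ t ∈ I, ∀ r : ℝ, 0 < r →
      (deriv (fun τ => ρ τ r) t + u t r * deriv (ρ t) r
        + ρ t r * (deriv (u t) r + (n - 1) * u t r / r) = 0) ∧
      (deriv (fun τ => u τ r) t + u t r * deriv (u t) r
        + deriv (p t) r / ρ t r = 0) ∧
      (deriv (fun τ => p τ r) t + u t r * deriv (p t) r
        + γ * p t r * (deriv (u t) r + (n - 1) * u t r / r) = 0) :=
  affine_flow_lambda_nonzero_solves_euler_general n γ lam hlam I pbar pbar' pbar'' hpbar' hpbar''
    hsgn α α' hαpos hα' hα'' ρ u p hρ hu hp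
end
end
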